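/- Let n ≥ 3 and f₁, …, fₙ be pairwise relatively prime univariate polynomials over ℂ, at most one of which is constant and not all constant, with f₁ + ⋯ + fₙ = 0. Then max₁≤m≤n deg fₘ ≤ (n−2)·(r(f₁f₂⋯fₙ) − (n−1)/2). -/

import Mathlib

open Polynomial

/-- `rdeg g` = number of distinct complex roots of `g` (degree of its radical). -/
noncomputable def rdeg (g : ℂ[X]) : ℕ := g.roots.toFinset.card

/-!
Suppose first that the polynomials other than `f m` are linearly independent, say `k` of them.
Then their Wronskian `W` is nonzero, and multiplying its `j`-th column by `X ^ j` shows
`deg W ≤ ∑ deg fᵢ - k(k-1)/2`. For every `i ≠ m` the factor `∏ (X - a) ^ (mult_a fᵢ - (k-1))`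
divides all the entries of row `i`, hence divides `W`; as `f m` is a linear combination of the
other `fᵢ`, the same holds for `f m` after replacing a row by that combination. These factors are
pairwise coprime, and comparing degrees gives `deg f m ≤ (k-1) (r - k/2)`, which is the claim
for `n = k + 1`.

In general one applies this to a linearly independent subfamily whose span contains `f m`. The
bound for the whole family is at least the bound for the subfamily, since each further
polynomial, except at most one constant, contributes at least one root.
-/

open Function

namespace Polynomial

variable {R K : Type*} [CommRing R] [Field K]

theorem coeff_prod_sum_of_natDegree_le {ι : Type*} (s : Finset ι) (f : ι → R[X]) (d : ι → ℕ)
    (h : ∀ i ∈ s, (f i).natDegree ≤ d i) :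
    (∏ i ∈ s, f i).coeff (∑ i ∈ s, d i) = ∏ i ∈ s, (f i).coeff (d i) := by
  induction s using Finset.cons_induction with
  | empty => simp
  | cons a s ha ih =>
    have hs : ∀ i ∈ s, (f i).natDegree ≤ d i := fun i hi => h i (Finset.mem_cons_of_mem hi)
    rw [Finset.prod_cons, Finset.sum_cons, Finset.prod_cons, ← ih hs]
    exact coeff_mul_add_eq_of_natDegree_le (h a (Finset.mem_cons_self a s))
      ((natDegree_prod_le s f).trans (Finset.sum_le_sum hs))

theorem natDegree_iterate_derivative_mul_X_pow_le (p : R[X]) (j : ℕ) :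
    (derivative^[j] p * X ^ j).natDegree ≤ p.natDegree := by
  by_cases hj : j ≤ p.natDegree
  · have := natDegree_iterate_derivative p j
    have := natDegree_X_pow_le (R := R) j
    exact natDegree_mul_le.trans (by omega)
  · rw [iterate_derivative_eq_zero (by omega), zero_mul, natDegree_zero]
    exact Nat.zero_le _

theorem coeff_iterate_derivative_mul_X_pow_natDegree (p : R[X]) (j : ℕ) :
    (derivative^[j] p * X ^ j).coeff p.natDegree =
      (p.natDegree.descFactorial j : R) * p.leadingCoeff := by
  rw [coeff_mul_X_pow']
  split_ifs with hj
  · rw [coeff_iterate_derivative, Nat.sub_add_cancel hj, nsmul_eq_mul]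
    rfl
  · rw [Nat.descFactorial_eq_zero_iff_lt.mpr (by omega), Nat.cast_zero, zero_mul]

theorem natDegree_sub_leadingCoeff_div_smul_lt {p q : K[X]} (hp : p ≠ 0) (hq : q ≠ 0)
    (hpq : p.natDegree = q.natDegree) (hne : p - (p.leadingCoeff / q.leadingCoeff) • q ≠ 0) :
    (p - (p.leadingCoeff / q.leadingCoeff) • q).natDegree < p.natDegree := by
  have hc : p.leadingCoeff / q.leadingCoeff ≠ 0 :=
    div_ne_zero (leadingCoeff_ne_zero.mpr hp) (leadingCoeff_ne_zero.mpr hq)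
  refine natDegree_lt_natDegree hne (degree_sub_lt_left ?_ hp ?_)
  · rw [smul_eq_C_mul, degree_C_mul hc, degree_eq_natDegree hp, degree_eq_natDegree hq, hpq]
  · rw [smul_eq_C_mul, leadingCoeff_mul, leadingCoeff_C,
      div_mul_cancel₀ _ (leadingCoeff_ne_zero.mpr hq)]

theorem disjoint_roots_toFinset_of_isCoprime [DecidableEq K] {p q : K[X]} (h : IsCoprime p q) :
    Disjoint p.roots.toFinset q.roots.toFinset := by
  refine Finset.disjoint_left.mpr fun a hp hq => ?_
  rw [Multiset.mem_toFinset, mem_roots'] at hp hq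
  have := aeval_ne_zero_of_isCoprime h a
  rw [coe_aeval_eq_eval] at this
  exact this.elim (· hp.2) (· hq.2)

theorem ne_zero_of_pairwise_isCoprime {ι : Type*} [Fintype ι] (hι : 2 < Fintype.card ι)
    {f : ι → K[X]} (hcop : Pairwise (IsCoprime on f))
    (hone : {i | (f i).natDegree = 0}.Subsingleton) (i : ι) : f i ≠ 0 := by
  classical
  intro hi
  obtain ⟨j, hj, l, hl, hjl⟩ := Finset.one_lt_card.mp
    (show 1 < ({i}ᶜ : Finset ι).card by rw [Finset.card_compl, Finset.card_singleton]; omega)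
  have hconst : ∀ j ≠ i, (f j).natDegree = 0 := fun j hj =>
    natDegree_eq_zero_of_isUnit (isCoprime_zero_left.mp (hi ▸ hcop hj.symm))
  exact hjl (hone (hconst j (by simpa using hj)) (hconst l (by simpa using hl)))

end Polynomial

namespace Matrix

variable {R : Type*} [CommRing R]

theorem coeff_det_sum_of_natDegree_le {k : ℕ} (M : Matrix (Fin k) (Fin k) R[X]) (d : Fin k → ℕ)
    (h : ∀ i j, (M i j).natDegree ≤ d i) :
    M.det.coeff (∑ i, d i) = (of fun i j => (M i j).coeff (d i)).det := by
  rw [det_apply', det_apply', finsetSum_coeff]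
  refine Finset.sum_congr rfl fun σ _ => ?_
  rw [coeff_intCast_mul, ← Equiv.sum_comp σ d, coeff_prod_sum_of_natDegree_le _
    (fun i => M (σ i) i) (fun i => d (σ i)) fun i _ => h (σ i) i]
  rfl

theorem natDegree_det_le_sum {k : ℕ} (M : Matrix (Fin k) (Fin k) R[X]) (d : Fin k → ℕ)
    (h : ∀ i j, (M i j).natDegree ≤ d i) : M.det.natDegree ≤ ∑ i, d i := by
  rw [det_apply']
  refine natDegree_sum_le_of_forall_le _ _ fun σ _ => natDegree_mul_le.trans ?_
  rw [natDegree_intCast, zero_add, ← Equiv.sum_comp σ d]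
  exact (natDegree_prod_le _ _).trans (Finset.sum_le_sum fun i _ => h (σ i) i)

theorem dvd_det_of_dvd_row {n : Type*} [Fintype n] [DecidableEq n] (M : Matrix n n R) (r : n)
    {q : R} (h : ∀ j, q ∣ M r j) : q ∣ M.det := by
  choose v hv using h
  have hM : M = M.updateRow r (q • v) := by
    ext i j
    rcases eq_or_ne i r with rfl | hi
    · simp [hv]
    · simp [hi]
  rw [hM, det_updateRow_smul]
  exact dvd_mul_right _ _

end Matrix

namespace Polynomial

section Wronskian

variable {R K : Type*} [CommRing R] [Field K] {k : ℕ}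

noncomputable def wronskianMatrix (f : Fin k → R[X]) : Matrix (Fin k) (Fin k) R[X] :=
  Matrix.of fun i j => derivative^[j] (f i)

theorem det_wronskianMatrix_mul_X_pow (f : Fin k → R[X]) :
    (Matrix.of fun i j : Fin k => derivative^[j] (f i) * X ^ (j : ℕ)).det =
      (wronskianMatrix f).det * X ^ (∑ j : Fin k, (j : ℕ)) := by
  have hdiag : wronskianMatrix f * Matrix.diagonal (fun j : Fin k => (X : R[X]) ^ (j : ℕ)) =
      Matrix.of fun i j : Fin k => derivative^[j] (f i) * X ^ (j : ℕ) := by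
    ext i j
    rw [Matrix.mul_diagonal]
    rfl
  rw [← hdiag, Matrix.det_mul, Matrix.det_diagonal, Finset.prod_pow_eq_pow_sum]

theorem natDegree_det_wronskianMatrix_add_le (f : Fin k → R[X])
    (hW : (wronskianMatrix f).det ≠ 0) :
    (wronskianMatrix f).det.natDegree + ∑ j : Fin k, (j : ℕ) ≤ ∑ i, (f i).natDegree := by
  have h := Matrix.natDegree_det_le_sum (Matrix.of fun i j : Fin k => derivative^[j] (f i) *
    X ^ (j : ℕ)) (fun i => (f i).natDegree) fun i j => natDegree_iterate_derivative_mul_X_pow_le _ _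
  have : Nontrivial R := nontrivial_iff.mp ⟨⟨_, _, hW⟩⟩
  rwa [det_wronskianMatrix_mul_X_pow, natDegree_mul_X_pow _ hW] at h

theorem det_wronskianMatrix_update_sub_smul (f : Fin k → R[X]) {a b : Fin k} (hab : a ≠ b)
    (c : R) :
    (wronskianMatrix (Function.update f b (f b - c • f a))).det = (wronskianMatrix f).det := by
  have hrow : wronskianMatrix (Function.update f b (f b - c • f a)) =
      (wronskianMatrix f).updateRow b (wronskianMatrix f b + (-C c) • wronskianMatrix f a) := by
    ext i j
    rcases eq_or_ne i b with rfl | hi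
    · simp [wronskianMatrix, iterate_derivative_smul, sub_eq_add_neg]
    · simp [wronskianMatrix, hi]
  have := Matrix.det_updateRow_add_smul_self (wronskianMatrix f) hab.symm (-C c)
  rw [hrow]
  exact this

variable [CharZero K]

/-- The coefficient of `X ^ ∑ deg fᵢ` in `W * X ^ ∑ j` is `∏ lc fᵢ` times the Vandermonde
determinant of the degrees. -/
theorem det_wronskianMatrix_ne_zero_of_injective (f : Fin k → K[X]) (h0 : ∀ i, f i ≠ 0)
    (hinj : Function.Injective fun i => (f i).natDegree) : (wronskianMatrix f).det ≠ 0 := by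
  set d := fun i => (f i).natDegree
  have htop : ((wronskianMatrix f).det * X ^ (∑ j : Fin k, (j : ℕ))).coeff (∑ i, d i) =
      (Matrix.diagonal fun i => (f i).leadingCoeff).det *
        (Matrix.of fun i j : Fin k => (descPochhammer K j).eval (d i : K)).det := by
    rw [← det_wronskianMatrix_mul_X_pow, Matrix.coeff_det_sum_of_natDegree_le
      (Matrix.of fun i j : Fin k => derivative^[j] (f i) * X ^ (j : ℕ)) d
      fun i j => natDegree_iterate_derivative_mul_X_pow_le _ _, ← Matrix.det_mul]
    congr 1
    ext i j
    simp only [Matrix.of_apply, Matrix.diagonal_mul, d]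
    rw [coeff_iterate_derivative_mul_X_pow_natDegree, descPochhammer_eval_eq_descFactorial,
      mul_comm]
  have hV : (Matrix.of fun i j : Fin k => (descPochhammer K j).eval (d i : K)).det ≠ 0 := by
    rw [← Matrix.det_eval_matrixOfPolynomials_eq_det_vandermonde _ _
      (fun j => descPochhammer_natDegree K j) (fun j => monic_descPochhammer K j),
      Matrix.det_vandermonde_ne_zero_iff]
    exact fun a b hab => hinj (Nat.cast_injective hab)
  have hD : (Matrix.diagonal fun i => (f i).leadingCoeff).det ≠ 0 := by
    rw [Matrix.det_diagonal]
    exact Finset.prod_ne_zero_iff.mpr fun i _ => leadingCoeff_ne_zero.mpr (h0 i)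
  intro hW
  rw [hW, zero_mul, coeff_zero] at htop
  exact mul_ne_zero hD hV htop.symm

/-- Cancelling leading terms between two rows of equal degree keeps the Wronskian and linear
independence, and lowers the total degree until all degrees are distinct. -/
theorem det_wronskianMatrix_ne_zero {f : Fin k → K[X]} (hf : LinearIndependent K f) :
    (wronskianMatrix f).det ≠ 0 := by
  induction hs : ∑ i, (f i).natDegree using Nat.strong_induction_on generalizing f with
  | _ s IH =>
  by_cases hinj : Function.Injective fun i => (f i).natDegree
  · exact det_wronskianMatrix_ne_zero_of_injective f hf.ne_zero hinj
  obtain ⟨a, b, hdeg, hab⟩ := Function.not_injective_iff.mp hinj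
  set c := (f b).leadingCoeff / (f a).leadingCoeff
  set g := Function.update f b (f b - c • f a)
  have hg : LinearIndependent K g := by
    refine hf.update b _ ⟨1, one_mem _, Finsupp.single b 1 - Finsupp.single a c, ?_, ?_⟩
    · simp [Finsupp.single_eq_of_ne' hab]
    · simp [map_sub, Finsupp.linearCombination_single]
  have hlt : (f b - c • f a).natDegree < (f b).natDegree := by
    refine natDegree_sub_leadingCoeff_div_smul_lt (hf.ne_zero b) (hf.ne_zero a) hdeg.symm ?_
    simpa [g] using hg.ne_zero b
  have hsum : ∑ i, (g i).natDegree < s := hs ▸ Finset.sum_lt_sum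
    (fun i _ => by rcases eq_or_ne i b with rfl | hi <;> simp [g, *, hlt.le])
    ⟨b, Finset.mem_univ _, by simpa [g] using hlt⟩
  rw [← det_wronskianMatrix_update_sub_smul f hab c]
  exact IH _ hsum hg rfl

end Wronskian

section ReduceRootMultiplicity

variable {K : Type*} [Field K] [DecidableEq K]

noncomputable def reduceRootMultiplicity (c : ℕ) (p : K[X]) : K[X] :=
  ∏ a ∈ p.roots.toFinset, (X - C a) ^ (p.rootMultiplicity a - c)

theorem reduceRootMultiplicity_dvd_iterate_derivative {c t : ℕ} (p : K[X]) (ht : t ≤ c) :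
    reduceRootMultiplicity c p ∣ derivative^[t] p := by
  refine Finset.prod_dvd_of_coprime
    (fun a _ b _ hab => (pairwise_coprime_X_sub_C Function.injective_id hab).pow) fun a _ => ?_
  exact (pow_dvd_pow _ (by omega)).trans
    (pow_sub_dvd_iterate_derivative_of_pow_dvd t (p.pow_rootMultiplicity_dvd a))

theorem reduceRootMultiplicity_dvd (c : ℕ) (p : K[X]) : reduceRootMultiplicity c p ∣ p :=
  reduceRootMultiplicity_dvd_iterate_derivative (t := 0) p (Nat.zero_le c)

theorem reduceRootMultiplicity_ne_zero (c : ℕ) (p : K[X]) : reduceRootMultiplicity c p ≠ 0 :=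
  Finset.prod_ne_zero_iff.mpr fun a _ => pow_ne_zero _ (X_sub_C_ne_zero a)

theorem _root_.IsCoprime.reduceRootMultiplicity {p q : K[X]} (h : IsCoprime p q) (c d : ℕ) :
    IsCoprime (reduceRootMultiplicity c p) (reduceRootMultiplicity d q) :=
  (h.of_isCoprime_of_dvd_left (reduceRootMultiplicity_dvd c p)).of_isCoprime_of_dvd_right
    (reduceRootMultiplicity_dvd d q)

theorem natDegree_le_natDegree_reduceRootMultiplicity_add [IsAlgClosed K] (c : ℕ) (p : K[X]) :
    p.natDegree ≤ (reduceRootMultiplicity c p).natDegree + c * p.roots.toFinset.card := by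
  have hsum : ∑ a ∈ p.roots.toFinset, p.rootMultiplicity a = p.natDegree := by
    rw [← IsAlgClosed.card_roots_eq_natDegree, ← Multiset.toFinset_sum_count_eq]
    exact Finset.sum_congr rfl fun a _ => (count_roots p).symm
  rw [reduceRootMultiplicity, natDegree_prod _ _ fun a _ => pow_ne_zero _ (X_sub_C_ne_zero a),
    ← hsum, mul_comm, ← smul_eq_mul, ← Finset.sum_const, ← Finset.sum_add_distrib]
  exact Finset.sum_le_sum fun a _ => by rw [natDegree_pow, natDegree_X_sub_C]; omega

end ReduceRootMultiplicity

end Polynomial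

theorem mem_span_image_ne_of_sum_eq_zero {K V ι : Type*} [Field K] [AddCommGroup V] [Module K V]
    [Fintype ι] [DecidableEq ι] {f : ι → V} (hsum : ∑ i, f i = 0) (m : ι) :
    f m ∈ Submodule.span K (f '' {i | i ≠ m}) := by
  rw [eq_neg_of_add_eq_zero_left ((Finset.add_sum_erase _ f (Finset.mem_univ m)).trans hsum)]
  exact neg_mem (Submodule.sum_mem _ fun i hi =>
    Submodule.subset_span ⟨i, Finset.ne_of_mem_erase hi, rfl⟩)

theorem exists_finset_linearIndependent_mem_span {K V ι : Type*} [Field K] [AddCommGroup V]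
    [Module K V] [Finite ι] {f : ι → V} {s : Set ι} {x : V} (hx : x ∈ Submodule.span K (f '' s)) :
    ∃ T : Finset ι, ↑T ⊆ s ∧ LinearIndependent K (fun i : T => f i) ∧
      x ∈ Submodule.span K (Set.range fun i : T => f i) := by
  obtain ⟨T, hTs, -, hspan, hT⟩ := exists_linearIndepOn_extension (linearIndepOn_empty K f)
    (Set.empty_subset s)
  obtain ⟨T, rfl⟩ := (Set.toFinite T).exists_finset_coe
  refine ⟨T, hTs, hT, ?_⟩
  change x ∈ Submodule.span K (Set.range fun i : (T : Set ι) => f i)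
  rw [← Set.image_eq_range]
  exact Submodule.span_le.mpr hspan hx

theorem rdeg_prod {ι : Type*} (s : Finset ι) (f : ι → ℂ[X]) (h0 : ∀ i ∈ s, f i ≠ 0)
    (hcop : (s : Set ι).Pairwise (IsCoprime on f)) :
    rdeg (∏ i ∈ s, f i) = ∑ i ∈ s, rdeg (f i) := by
  classical
  have hroots : (∏ i ∈ s, f i).roots.toFinset = s.biUnion fun i => (f i).roots.toFinset := by
    ext a
    simp only [Multiset.mem_toFinset, Finset.mem_biUnion, mem_roots', IsRoot.def, eval_prod,
      Finset.prod_eq_zero_iff]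
    exact ⟨fun h => h.2.imp fun i hi => ⟨hi.1, h0 i hi.1, hi.2⟩,
      fun ⟨i, hi, _, hr⟩ => ⟨Finset.prod_ne_zero_iff.mpr h0, i, hi, hr⟩⟩
  rw [rdeg, hroots, Finset.card_biUnion fun i hi j hj hij =>
    disjoint_roots_toFinset_of_isCoprime (hcop hi hj hij)]
  rfl

theorem one_le_rdeg {p : ℂ[X]} (hp : p.natDegree ≠ 0) : 1 ≤ rdeg p := by
  have hp0 : p ≠ 0 := fun h => hp (h ▸ natDegree_zero)
  obtain ⟨z, hz⟩ := IsAlgClosed.exists_root p fun h => hp (natDegree_eq_of_degree_eq_some h)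
  exact Finset.card_pos.mpr ⟨z, Multiset.mem_toFinset.mpr (mem_roots'.mpr ⟨hp0, hz⟩)⟩

theorem card_le_one_add_sum_rdeg {ι : Type*} (f : ι → ℂ[X])
    (hone : {i | (f i).natDegree = 0}.Subsingleton) (s : Finset ι) :
    s.card ≤ 1 + ∑ i ∈ s, rdeg (f i) := by
  classical
  set t := s.filter fun i => (f i).natDegree = 0
  have ht : t.card ≤ 1 := Finset.card_le_one.mpr fun a ha b hb =>
    hone (Finset.mem_filter.mp ha).2 (Finset.mem_filter.mp hb).2
  have hrest : (s \ t).card ≤ ∑ i ∈ s \ t, rdeg (f i) := by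
    rw [Finset.card_eq_sum_ones]
    refine Finset.sum_le_sum fun i hi => one_le_rdeg fun h0 => ?_
    rw [Finset.mem_sdiff, Finset.mem_filter] at hi
    exact hi.2 ⟨hi.1, h0⟩
  have hcard : (s \ t).card + t.card = s.card :=
    Finset.card_sdiff_add_card_eq_card (Finset.filter_subset _ _)
  have hsub : ∑ i ∈ s \ t, rdeg (f i) ≤ ∑ i ∈ s, rdeg (f i) :=
    Finset.sum_le_sum_of_subset Finset.sdiff_subset
  omega

theorem sub_two_mul_sum_rdeg_sub_half_le {ι : Type*} [Fintype ι] (f : ι → ℂ[X])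
    (hone : {i | (f i).natDegree = 0}.Subsingleton) (hι : 3 ≤ Fintype.card ι) {S : Finset ι}
    (hS : S.Nonempty) :
    ((S.card : ℚ) - 2) * (∑ i ∈ S, rdeg (f i) - ((S.card : ℚ) - 1) / 2) ≤
      ((Fintype.card ι : ℚ) - 2) * (∑ i, rdeg (f i) - ((Fintype.card ι : ℚ) - 1) / 2) := by
  classical
  have hsplit := Finset.sum_sdiff (f := fun i => (rdeg (f i) : ℚ)) (Finset.subset_univ S)
  have hcard : (S.card : ℚ) + (Finset.univ \ S).card = Fintype.card ι := by
    rw [Finset.card_sdiff_of_subset (Finset.subset_univ S), Finset.card_univ,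
      Nat.cast_sub (Finset.card_le_univ S)]
    ring
  have hS1 : (1 : ℚ) ≤ S.card := by exact_mod_cast hS.card_pos
  have hSR : (S.card : ℚ) ≤ 1 + ∑ i ∈ S, (rdeg (f i) : ℚ) := by
    exact_mod_cast card_le_one_add_sum_rdeg f hone S
  have hCR : ((Finset.univ \ S).card : ℚ) ≤ 1 + ∑ i ∈ Finset.univ \ S, (rdeg (f i) : ℚ) := by
    exact_mod_cast card_le_one_add_sum_rdeg f hone (Finset.univ \ S)
  have hC0 : (0 : ℚ) ≤ ∑ i ∈ Finset.univ \ S, (rdeg (f i) : ℚ) :=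
    Finset.sum_nonneg fun i _ => Nat.cast_nonneg _
  have hι' : (3 : ℚ) ≤ Fintype.card ι := by exact_mod_cast hι
  push_cast
  nlinarith [mul_nonneg (sub_nonneg.mpr hS1) hC0]

theorem natDegree_add_sum_fin_le_of_linearIndependent {k : ℕ} {F : Fin k → ℂ[X]}
    (hF : LinearIndependent ℂ F) (hcop : Pairwise (IsCoprime on F)) {h : ℂ[X]} (h0 : h ≠ 0)
    (hh : ∀ i, IsCoprime h (F i)) {c : Fin k → ℂ} (hc : ∑ i, c i • F i = h) :
    h.natDegree + ∑ j : Fin k, (j : ℕ) ≤ (k - 1) * (rdeg h + ∑ i, rdeg (F i)) := by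
  set W := (wronskianMatrix F).det
  have hW : W ≠ 0 := det_wronskianMatrix_ne_zero hF
  set q := fun i => reduceRootMultiplicity (k - 1) (F i)
  set qh := reduceRootMultiplicity (k - 1) h
  have hjk : ∀ j : Fin k, (j : ℕ) ≤ k - 1 := fun j => by omega
  have hq : ∀ i, q i ∣ W := fun i => Matrix.dvd_det_of_dvd_row _ i fun j =>
    reduceRootMultiplicity_dvd_iterate_derivative _ (hjk j)
  have hqh : qh ∣ W := by
    obtain ⟨r, hr⟩ : ∃ r, c r ≠ 0 := by
      by_contra! hc0
      exact h0 (by simp [← hc, hc0])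
    have hrow : (fun j : Fin k => derivative^[j] h) = ∑ i, C (c i) • wronskianMatrix F i := by
      ext j : 1
      simp [← hc, wronskianMatrix, iterate_derivative_sum, Finset.sum_apply, smul_eq_C_mul]
    have := Matrix.dvd_det_of_dvd_row ((wronskianMatrix F).updateRow r fun j => derivative^[j] h)
      r fun j => by
        rw [Matrix.updateRow_self]
        exact reduceRootMultiplicity_dvd_iterate_derivative _ (hjk j)
    rw [hrow, Matrix.det_updateRow_sum, smul_eq_mul] at this
    exact (isUnit_C.mpr hr.isUnit).dvd_mul_left.mp this
  have hprod : qh * ∏ i, q i ∣ W :=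
    (IsCoprime.prod_right fun i _ => (hh i).reduceRootMultiplicity _ _).mul_dvd hqh
      (Finset.prod_dvd_of_coprime (fun i _ j _ hij => (hcop hij).reduceRootMultiplicity _ _)
        fun i _ => hq i)
  have hdeg : qh.natDegree + ∑ i, (q i).natDegree ≤ W.natDegree := by
    rw [← natDegree_prod _ _ fun i _ => reduceRootMultiplicity_ne_zero _ _,
      ← natDegree_mul (reduceRootMultiplicity_ne_zero _ _)
        (Finset.prod_ne_zero_iff.mpr fun i _ => reduceRootMultiplicity_ne_zero _ _)]
    exact natDegree_le_of_dvd hprod hW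
  have hWdeg : W.natDegree + ∑ j : Fin k, (j : ℕ) ≤ ∑ i, (F i).natDegree :=
    natDegree_det_wronskianMatrix_add_le F hW
  have hbh : h.natDegree ≤ qh.natDegree + (k - 1) * rdeg h :=
    natDegree_le_natDegree_reduceRootMultiplicity_add _ _
  have hbF : ∑ i, (F i).natDegree ≤ ∑ i, (q i).natDegree + (k - 1) * ∑ i, rdeg (F i) := by
    rw [Finset.mul_sum, ← Finset.sum_add_distrib]
    exact Finset.sum_le_sum fun i _ => natDegree_le_natDegree_reduceRootMultiplicity_add _ _
  rw [mul_add]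
  omega

theorem natDegree_le_of_mem_span_of_linearIndependent {ι : Type*} [Fintype ι] {F : ι → ℂ[X]}
    (hF : LinearIndependent ℂ F) (hcop : Pairwise (IsCoprime on F)) {h : ℂ[X]} (h0 : h ≠ 0)
    (hh : ∀ i, IsCoprime h (F i)) (hspan : h ∈ Submodule.span ℂ (Set.range F)) :
    (h.natDegree : ℚ) ≤
      (Fintype.card ι - 1) * ((rdeg h + ∑ i, rdeg (F i) : ℕ) - Fintype.card ι / 2) := by
  set k := Fintype.card ι
  set e := Fintype.equivFin ι
  obtain ⟨c, hc⟩ := (Submodule.mem_span_range_iff_exists_fun ℂ).mp hspan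
  have hk : 1 ≤ k := by
    by_contra! hk0
    have : IsEmpty ι := Fintype.card_eq_zero_iff.mp (by omega)
    exact h0 (by simp [← hc])
  have hbound := natDegree_add_sum_fin_le_of_linearIndependent (hF.comp _ e.symm.injective)
    (fun i j hij => hcop (e.symm.injective.ne hij)) h0 (fun i => hh _) (c := c ∘ e.symm)
    (by rw [← hc, ← e.symm.sum_comp]; rfl)
  simp only [Function.comp_apply, Equiv.sum_comp e.symm fun i => rdeg (F i)] at hbound
  have hgauss : (∑ j : Fin k, (j : ℕ)) * 2 = k * (k - 1) := by
    rw [Fin.sum_univ_eq_sum_range (fun j => j), Finset.sum_range_id_mul_two]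
  have hbound' : ((h.natDegree + ∑ j : Fin k, (j : ℕ) : ℕ) : ℚ) ≤
      ((k - 1) * (rdeg h + ∑ i, rdeg (F i)) : ℕ) := by exact_mod_cast hbound
  have hgauss' : (((∑ j : Fin k, (j : ℕ)) * 2 : ℕ) : ℚ) = ((k * (k - 1) : ℕ) : ℚ) := by
    rw [hgauss]
  push_cast [Nat.cast_sub hk] at hbound' hgauss' ⊢
  linarith

theorem stmt3_general (n : ℕ) (hn : 3 ≤ n) (f : Fin n → ℂ[X])
    (hcop : ∀ i j, i ≠ j → IsCoprime (f i) (f j))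
    (hone : {i : Fin n | (f i).natDegree = 0}.Subsingleton)
    (hsum : ∑ i, f i = 0) :
    ∀ m, ((f m).natDegree : ℚ) ≤
      ((n : ℚ) - 2) * ((rdeg (∏ i, f i) : ℚ) - ((n : ℚ) - 1) / 2) := by
  intro m
  have hn' : 3 ≤ Fintype.card (Fin n) := by rwa [Fintype.card_fin]
  have hf0 : ∀ i, f i ≠ 0 := ne_zero_of_pairwise_isCoprime (by omega) (fun i j => hcop i j) hone
  obtain ⟨T, hTm, hT, hspan⟩ :=
    exists_finset_linearIndependent_mem_span (mem_span_image_ne_of_sum_eq_zero (K := ℂ) hsum m)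
  have hmT : m ∉ T := fun h => hTm h rfl
  have hsub := natDegree_le_of_mem_span_of_linearIndependent hT
    (fun i j hij => hcop i j (Subtype.coe_injective.ne hij)) (hf0 m)
    (fun i => hcop m i fun h => hmT (h ▸ i.2)) hspan
  have hmono := sub_two_mul_sum_rdeg_sub_half_le f hone hn' (Finset.insert_nonempty m T)
  rw [Fintype.card_coe, Finset.sum_coe_sort T fun i => rdeg (f i)] at hsub
  rw [Finset.card_insert_of_notMem hmT, Finset.sum_insert hmT, Fintype.card_fin] at hmono
  rw [rdeg_prod _ f (fun i _ => hf0 i) fun i _ j _ hij => hcop i j hij]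
  push_cast at hsub hmono ⊢
  linear_combination hsub + hmono

theorem stmt3 (n : ℕ) (hn : 3 ≤ n) (f : Fin n → ℂ[X])
    (hcop : ∀ i j, i ≠ j → IsCoprime (f i) (f j))
    (hone : {i : Fin n | (f i).natDegree = 0}.Subsingleton)
    (hconst : ¬ ∀ i, (f i).natDegree = 0)
    (hsum : ∑ i, f i = 0) :
    ∀ m, ((f m).natDegree : ℚ) ≤
      ((n : ℚ) - 2) * ((rdeg (∏ i, f i) : ℚ) - ((n : ℚ) - 1) / 2) :=
  stmt3_general n hn f hcop hone hsum
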